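/- Let {a_m}, {b_n} be orthonormal bases of ℂ^d. Then Ω₁ := max over pairs (m,n) and density matrices ρ of ⟨a_m|ρ|a_m⟩·⟨b_n|ρ|b_n⟩ equals (1/4)·(1+c)², where c = max_{m,n} |⟨a_m|b_n⟩|. -/

import Mathlib

/-
For unit vectors `a`, `b` and a state `ρ`, `⟨a|ρ|a⟩ + ⟨b|ρ|b⟩ ≤ 1 + |⟨a|b⟩|`. Writing `ρ` as a sum
of rank-one terms `|v⟩⟨v|` reduces this to `|⟨a|v⟩|² + |⟨b|v⟩|² ≤ (1 + |⟨a|b⟩|) ‖v‖²`, which is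
Cauchy–Schwarz against `w = ⟨a|v⟩ a + ⟨b|v⟩ b`, since `⟪w, v⟫ = |⟨a|v⟩|² + |⟨b|v⟩|²` and
`‖w‖² ≤ (1 + |⟨a|b⟩|)(|⟨a|v⟩|² + |⟨b|v⟩|²)`. AM–GM then bounds the product by `(1 + c)² / 4`.
Equality holds for the pure state along `a + z b`, where the phase `z` makes `z ⟨a|b⟩ = |⟨a|b⟩|`:
both expectations are then `(1 + c) / 2`.
-/

open scoped Matrix.Norms.L2Operator ComplexOrder
open Matrix
open RCLike ComplexConjugate
open scoped InnerProductSpace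

section InnerProductSpace

variable {𝕜 E : Type*} [RCLike 𝕜] [NormedAddCommGroup E] [InnerProductSpace 𝕜 E]

lemma RCLike.exists_norm_eq_one_mul_eq_norm (x : 𝕜) : ∃ z : 𝕜, ‖z‖ = 1 ∧ z * x = ‖x‖ := by
  rcases eq_or_ne x 0 with rfl | hx
  · exact ⟨1, by simp, by simp⟩
  · refine ⟨conj x / ‖x‖, ?_, ?_⟩
    · simp [norm_ne_zero_iff.mpr hx]
    · rw [div_mul_eq_mul_div, RCLike.conj_mul, sq, mul_div_assoc, div_self (by simpa using hx),
        mul_one]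

lemma norm_smul_add_smul_sq_le {a b : E} (ha : ‖a‖ = 1) (hb : ‖b‖ = 1) (u v : 𝕜) :
    ‖u • a + v • b‖ ^ 2 ≤ (1 + ‖⟪a, b⟫_𝕜‖) * (‖u‖ ^ 2 + ‖v‖ ^ 2) := by
  have hcross : re ⟪u • a, v • b⟫_𝕜 ≤ ‖u‖ * ‖v‖ * ‖⟪a, b⟫_𝕜‖ := calc
    re ⟪u • a, v • b⟫_𝕜 ≤ ‖⟪u • a, v • b⟫_𝕜‖ := re_le_norm _
    _ = ‖u‖ * ‖v‖ * ‖⟪a, b⟫_𝕜‖ := by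
      simp [inner_smul_left, inner_smul_right, mul_assoc, mul_left_comm]
  rw [@norm_add_sq 𝕜, norm_smul, norm_smul, ha, hb]
  nlinarith [sq_nonneg (‖u‖ - ‖v‖), norm_nonneg ⟪a, b⟫_𝕜]

lemma norm_inner_sq_add_norm_inner_sq_le {a b : E} (ha : ‖a‖ = 1) (hb : ‖b‖ = 1) (x : E) :
    ‖⟪a, x⟫_𝕜‖ ^ 2 + ‖⟪b, x⟫_𝕜‖ ^ 2 ≤ (1 + ‖⟪a, b⟫_𝕜‖) * ‖x‖ ^ 2 := by
  set S := ‖⟪a, x⟫_𝕜‖ ^ 2 + ‖⟪b, x⟫_𝕜‖ ^ 2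
  set w := ⟪a, x⟫_𝕜 • a + ⟪b, x⟫_𝕜 • b
  have hwx : S ≤ ‖w‖ * ‖x‖ := calc
    S = re ⟪w, x⟫_𝕜 := by
      simp only [w, S, inner_add_left, inner_smul_left, RCLike.conj_mul, ← ofReal_pow, ← ofReal_add,
        ofReal_re]
    _ ≤ ‖w‖ * ‖x‖ := re_inner_le_norm w x
  have hw : ‖w‖ ^ 2 ≤ (1 + ‖⟪a, b⟫_𝕜‖) * S := norm_smul_add_smul_sq_le ha hb _ _
  have hS : 0 ≤ S := by positivity
  rcases hS.eq_or_lt with hS0 | hSpos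
  · rw [← hS0]; positivity
  · have : S * S ≤ (1 + ‖⟪a, b⟫_𝕜‖) * ‖x‖ ^ 2 * S := by
      nlinarith [mul_le_mul hwx hwx hS (by positivity)]
    exact le_of_mul_le_mul_right this hSpos

lemma exists_norm_inner_eq_one_add_norm_inner {a b : E} (ha : ‖a‖ = 1) (hb : ‖b‖ = 1) :
    ∃ w : E, ‖⟪a, w⟫_𝕜‖ = 1 + ‖⟪a, b⟫_𝕜‖ ∧ ‖⟪b, w⟫_𝕜‖ = 1 + ‖⟪a, b⟫_𝕜‖ ∧
      ‖w‖ ^ 2 = 2 * (1 + ‖⟪a, b⟫_𝕜‖) := by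
  obtain ⟨z, hz, hzab⟩ := RCLike.exists_norm_eq_one_mul_eq_norm ⟪a, b⟫_𝕜
  set c := ‖⟪a, b⟫_𝕜‖
  have hc : 0 ≤ c := norm_nonneg _
  refine ⟨a + z • b, ?_, ?_, ?_⟩
  · have : ⟪a, a + z • b⟫_𝕜 = ((1 + c : ℝ) : 𝕜) := by
      rw [inner_add_right, inner_smul_right, hzab, inner_self_eq_norm_sq_to_K, ha]
      simp
    rw [this, norm_of_nonneg (by positivity)]
  · have : conj z * ⟪b, a + z • b⟫_𝕜 = ((1 + c : ℝ) : 𝕜) := by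
      rw [inner_add_right, inner_smul_right, inner_self_eq_norm_sq_to_K, hb, ← inner_conj_symm,
        mul_add, ← mul_assoc, ← map_mul, hzab, RCLike.conj_mul, hz]
      simp [add_comm]
    calc ‖⟪b, a + z • b⟫_𝕜‖ = ‖conj z * ⟪b, a + z • b⟫_𝕜‖ := by
          rw [norm_mul, RCLike.norm_conj, hz, one_mul]
      _ = 1 + c := by rw [this, norm_of_nonneg (by positivity)]
  · rw [@norm_add_sq 𝕜, norm_smul, hz, ha, hb, inner_smul_right, hzab, ofReal_re]
    ring

lemma exists_norm_eq_one_norm_inner_sq_eq_half {a b : E} (ha : ‖a‖ = 1) (hb : ‖b‖ = 1) :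
    ∃ ψ : E, ‖ψ‖ = 1 ∧ ‖⟪a, ψ⟫_𝕜‖ ^ 2 = (1 + ‖⟪a, b⟫_𝕜‖) / 2 ∧
      ‖⟪b, ψ⟫_𝕜‖ ^ 2 = (1 + ‖⟪a, b⟫_𝕜‖) / 2 := by
  obtain ⟨w, hwa, hwb, hw⟩ := exists_norm_inner_eq_one_add_norm_inner (𝕜 := 𝕜) ha hb
  have hc : 0 ≤ ‖⟪a, b⟫_𝕜‖ := norm_nonneg _
  have hw0 : w ≠ 0 := fun h ↦ by
    rw [h, norm_zero] at hw
    linarith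
  have hnormalize (x : E) : ‖⟪x, (‖w‖⁻¹ : 𝕜) • w⟫_𝕜‖ ^ 2 = ‖⟪x, w⟫_𝕜‖ ^ 2 / ‖w‖ ^ 2 := by
    rw [inner_smul_right, norm_mul, norm_inv, norm_algebraMap', norm_norm]
    ring
  refine ⟨(‖w‖⁻¹ : 𝕜) • w, norm_smul_inv_norm hw0, ?_, ?_⟩ <;>
  · simp only [hnormalize, hw, hwa, hwb]
    field_simp

end InnerProductSpace

section DensityMatrix

variable {𝕜 ι : Type*} [RCLike 𝕜] [Fintype ι]

lemma star_dotProduct_eq_inner (x y : ι → 𝕜) :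
    star x ⬝ᵥ y = ⟪WithLp.toLp 2 x, WithLp.toLp 2 y⟫_𝕜 := by
  rw [EuclideanSpace.inner_toLp_toLp, dotProduct_comm]

lemma star_dotProduct_self_eq_one_iff (x : ι → 𝕜) :
    star x ⬝ᵥ x = 1 ↔ ‖WithLp.toLp 2 x‖ = 1 := by
  rw [star_dotProduct_eq_inner, inner_self_eq_norm_sq_to_K]
  norm_cast
  exact pow_eq_one_iff_of_nonneg (norm_nonneg _) two_ne_zero

lemma star_dotProduct_vecMulVec_mulVec (x v : ι → 𝕜) :
    star x ⬝ᵥ (vecMulVec v (star v) *ᵥ x) = (‖star x ⬝ᵥ v‖ ^ 2 : ℝ) := by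
  rw [vecMulVec_mulVec, op_smul_eq_smul, dotProduct_smul, smul_eq_mul, star_dotProduct v,
    RCLike.star_def, RCLike.conj_mul, ofReal_pow]

lemma norm_star_dotProduct_sq_add_le {a b : ι → 𝕜} (ha : star a ⬝ᵥ a = 1) (hb : star b ⬝ᵥ b = 1)
    (x : ι → 𝕜) :
    ‖star a ⬝ᵥ x‖ ^ 2 + ‖star b ⬝ᵥ x‖ ^ 2 ≤ (1 + ‖star a ⬝ᵥ b‖) * re (star x ⬝ᵥ x) := by
  rw [star_dotProduct_self_eq_one_iff] at ha hb
  simp only [star_dotProduct_eq_inner, inner_self_eq_norm_sq]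
  exact norm_inner_sq_add_norm_inner_sq_le ha hb _

lemma re_star_dotProduct_mulVec_add_le {ρ : Matrix ι ι 𝕜} (hρ : ρ.PosSemidef) {a b : ι → 𝕜}
    (ha : star a ⬝ᵥ a = 1) (hb : star b ⬝ᵥ b = 1) :
    re (star a ⬝ᵥ ρ *ᵥ a) + re (star b ⬝ᵥ ρ *ᵥ b) ≤ (1 + ‖star a ⬝ᵥ b‖) * re ρ.trace := by
  obtain ⟨m, v, rfl⟩ := posSemidef_iff_eq_sum_vecMulVec.mp hρ
  simp only [sum_mulVec, dotProduct_sum, trace_sum, trace_vecMulVec, map_sum,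
    star_dotProduct_vecMulVec_mulVec, ofReal_re, Finset.mul_sum, ← Finset.sum_add_distrib]
  gcongr with i
  rw [dotProduct_comm (v i)]
  exact norm_star_dotProduct_sq_add_le ha hb (v i)

lemma exists_posSemidef_trace_eq_one_re_star_dotProduct_mulVec_eq_half
    {a b : ι → 𝕜} (ha : star a ⬝ᵥ a = 1) (hb : star b ⬝ᵥ b = 1) :
    ∃ ρ : Matrix ι ι 𝕜, ρ.PosSemidef ∧ ρ.trace = 1 ∧
      re (star a ⬝ᵥ ρ *ᵥ a) = (1 + ‖star a ⬝ᵥ b‖) / 2 ∧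
      re (star b ⬝ᵥ ρ *ᵥ b) = (1 + ‖star a ⬝ᵥ b‖) / 2 := by
  rw [star_dotProduct_self_eq_one_iff] at ha hb
  obtain ⟨ψ, hψ, hψa, hψb⟩ := exists_norm_eq_one_norm_inner_sq_eq_half (𝕜 := 𝕜) ha hb
  refine ⟨vecMulVec ψ.ofLp (star ψ.ofLp), posSemidef_vecMulVec_self_star _, ?_, ?_, ?_⟩
  · rw [trace_vecMulVec, dotProduct_comm, star_dotProduct_self_eq_one_iff]
    exact hψ
  all_goals
    rw [star_dotProduct_vecMulVec_mulVec, ofReal_re]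
    simpa only [star_dotProduct_eq_inner, WithLp.toLp_ofLp]

end DensityMatrix

theorem stmt_14_general (d : ℕ) (a b : Fin d → (Fin d → ℂ))
    (ha : ∀ m m', star (a m) ⬝ᵥ a m' = if m = m' then 1 else 0)
    (hb : ∀ n n', star (b n) ⬝ᵥ b n' = if n = n' then 1 else 0)
    (c : ℝ) (hc : IsGreatest {x : ℝ | ∃ m n, x = ‖star (a m) ⬝ᵥ b n‖} c) :
    IsGreatest {x : ℝ | ∃ m n, ∃ ρ : Matrix (Fin d) (Fin d) ℂ,
        ρ.PosSemidef ∧ ρ.trace = 1 ∧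
        x = (star (a m) ⬝ᵥ ρ.mulVec (a m)).re * (star (b n) ⬝ᵥ ρ.mulVec (b n)).re}
      ((1 / 4) * (1 + c) ^ 2) := by
  obtain ⟨⟨m₀, n₀, hc₀⟩, hmax⟩ := hc
  have ha_self (m : Fin d) : star (a m) ⬝ᵥ a m = 1 := by simp [ha]
  have hb_self (n : Fin d) : star (b n) ⬝ᵥ b n = 1 := by simp [hb]
  constructor
  · obtain ⟨ρ, hρ, htr, hρa, hρb⟩ :=
      exists_posSemidef_trace_eq_one_re_star_dotProduct_mulVec_eq_half (ha_self m₀) (hb_self n₀)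
    refine ⟨m₀, n₀, ρ, hρ, htr, ?_⟩
    rw [← re_to_complex, ← re_to_complex, hρa, hρb, hc₀]
    ring
  · rintro x ⟨m, n, ρ, hρ, htr, rfl⟩
    have hsum := re_star_dotProduct_mulVec_add_le hρ (ha_self m) (hb_self n)
    have hp := hρ.re_dotProduct_nonneg (a m)
    have hq := hρ.re_dotProduct_nonneg (b n)
    rw [htr, one_re, mul_one] at hsum
    simp only [re_to_complex] at hsum hp hq
    set p := (star (a m) ⬝ᵥ ρ *ᵥ a m).re
    set q := (star (b n) ⬝ᵥ ρ *ᵥ b n).re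
    have hpq : p + q ≤ 1 + c := hsum.trans (by gcongr; exact hmax ⟨m, n, rfl⟩)
    calc p * q ≤ (p + q) ^ 2 / 4 := by linarith [four_mul_le_sq_add p q]
      _ ≤ (1 + c) ^ 2 / 4 := by gcongr
      _ = 1 / 4 * (1 + c) ^ 2 := by ring

/-- For two orthonormal bases `{a m}`, `{b n}` of `ℂ^d`,
`Ω₁ := max_{(m,n),ρ} ⟨a m|ρ|a m⟩·⟨b n|ρ|b n⟩ = (1/4)(1+c)²`, where
`c = max_{m,n} |⟨a m|b n⟩|` is the maximum overlap between the bases. -/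
theorem stmt_14 (d : ℕ) (hd : 0 < d) (a b : Fin d → (Fin d → ℂ))
    (ha : ∀ m m', star (a m) ⬝ᵥ a m' = if m = m' then 1 else 0)
    (hb : ∀ n n', star (b n) ⬝ᵥ b n' = if n = n' then 1 else 0)
    (c : ℝ) (hc : IsGreatest {x : ℝ | ∃ m n, x = ‖star (a m) ⬝ᵥ b n‖} c) :
    IsGreatest {x : ℝ | ∃ m n, ∃ ρ : Matrix (Fin d) (Fin d) ℂ,
        ρ.PosSemidef ∧ ρ.trace = 1 ∧
        x = (star (a m) ⬝ᵥ ρ.mulVec (a m)).re * (star (b n) ⬝ᵥ ρ.mulVec (b n)).re}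
      ((1 / 4) * (1 + c) ^ 2) :=
  stmt_14_general d a b ha hb c hc
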